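/- arXiv:1711.07554 — 5 statements merged into one kernel-verified Lean document; each statement's English description precedes it below -/
import Mathlib

section
/- Let F be a field of characteristic zero and let q, j, m, n be elements of F with q ≠ 0, m³ = j and n² = (j − 1728)/(−q). Then the Weierstrass curve over F defined by the equation y² = x³ + (m·q/(2⁴·3))·x − (n·q²/(2⁵·3³)) has discriminant equal to −q³ (in particular the discriminant is nonzero, so the equation defines an elliptic curve) and j-invariant equal to j. -/
/-! The curve is in short normal form, so `Δ = -16 (4 a₄³ + 27 a₆²)` and `c₄ = -48 a₄`; here these
become `-q³ (m³ + n² q) / 1728` and `-m q`, and the hypotheses say precisely that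
`m³ + n² q = 1728` and `m³ = j`. -/

namespace WeierstrassCurve

variable {F : Type*} [Field F] [NeZero (2 : F)] [NeZero (3 : F)]

abbrev grossModel (q m n : F) : WeierstrassCurve F :=
  ⟨0, 0, 0, m * q / (2 ^ 4 * 3), -(n * q ^ 2 / (2 ^ 5 * 3 ^ 3))⟩

instance isShortNF_grossModel (q m n : F) : (grossModel q m n).IsShortNF := ⟨rfl, rfl, rfl⟩

theorem grossModel_Δ (q m n : F) :
    (grossModel q m n).Δ = -q ^ 3 * (m ^ 3 + n ^ 2 * q) / (2 ^ 6 * 3 ^ 3) := by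
  rw [Δ_of_isShortNF]
  field_simp
  ring

theorem grossModel_c₄ (q m n : F) : (grossModel q m n).c₄ = -(m * q) := by
  rw [c₄_of_isShortNF]
  field_simp
  ring

end WeierstrassCurve

open WeierstrassCurve in
/-- Let `F` be a field of characteristic zero and `q, j, m, n ∈ F` with
`q ≠ 0`, `m³ = j` and `n² = (j − 1728)/(−q)`. Then the Weierstrass curve over `F` given by
`y² = x³ + (m·q/(2⁴·3))·x − (n·q²/(2⁵·3³))` has discriminant `−q³` (in particular nonzero)
and `j`-invariant `c₄³/Δ = j`. -/
theorem gross_curve_model_discriminant_and_j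
    {F : Type*} [Field F] [CharZero F] (q j m n : F) (hq : q ≠ 0)
    (hm : m ^ 3 = j) (hn : n ^ 2 = (j - 1728) / (-q)) :
    letI W : WeierstrassCurve F :=
      ⟨0, 0, 0, m * q / (2 ^ 4 * 3), -(n * q ^ 2 / (2 ^ 5 * 3 ^ 3))⟩
    W.Δ = -q ^ 3 ∧ W.Δ ≠ 0 ∧ W.c₄ ^ 3 / W.Δ = j := by
  change (grossModel q m n).Δ = _ ∧ (grossModel q m n).Δ ≠ 0 ∧ (grossModel q m n).c₄ ^ 3 / _ = j
  have hnq : n ^ 2 * q = 1728 - j := by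
    rw [hn, div_neg, neg_mul, div_mul_cancel₀ _ hq, neg_sub]
  have hsum : m ^ 3 + n ^ 2 * q = 2 ^ 6 * 3 ^ 3 := by
    rw [hm, hnq]
    ring
  have hΔ : (grossModel q m n).Δ = -q ^ 3 := by
    rw [grossModel_Δ, hsum, mul_div_cancel_right₀ _ (by norm_num)]
  refine ⟨hΔ, hΔ ▸ neg_ne_zero.2 (pow_ne_zero 3 hq), ?_⟩
  rw [hΔ, grossModel_c₄, ← hm]
  field_simp
end

section
/- Let p be an odd prime and ℓ ≥ 1 an integer. Let F be a field of characteristic zero, let ζ be a primitive p^ℓ-th root of unity in an algebraic closure of F, and assume that the degree [F(ζ):F] equals p^(ℓ−1)·(p−1). If x ∈ Fˣ is a p^ℓ-th power in the field F(ζ), then x is already a p^ℓ-th power in F. Equivalently, the natural map Fˣ/(Fˣ)^(p^ℓ) → F(ζ)ˣ/(F(ζ)ˣ)^(p^ℓ) induced by the inclusion F ⊆ F(ζ) is injective. -/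
open IntermediateField

/-!
Let `n = p ^ ℓ`. The degree hypothesis makes `Gal(F(ζ)/F) → (ℤ/nℤ)ˣ` bijective, so some `σ`
inverts all `n`-th roots of unity; the Galois group is abelian, so `σ` is central.
If `y ^ n = x`, then `σ y / y` is an `n`-th root of unity; as `n` is odd it is the square `η ^ 2`
of one, and `w = η y` is a `σ`-fixed `n`-th root of `x`. For any `τ`, the `n`-th root of unity
`ε = τ w / w` is fixed by `σ` (as `σ` commutes with `τ`) and inverted by `σ`, so `ε ^ 2 = 1`,
whence `ε = 1`. Thus `w` is fixed by the whole Galois group and lies in `F`.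
-/

theorem Odd.sq_pow_succ_div_two {M : Type*} [Monoid M] {n : ℕ} (hn : Odd n) {c : M}
    (hc : c ^ n = 1) : (c ^ ((n + 1) / 2)) ^ 2 = c := by
  rw [← pow_mul, Nat.div_mul_cancel hn.add_one.two_dvd, pow_succ, hc, one_mul]

section InvertingRootsOfUnity

variable {G L : Type*} [Monoid G] [Field L] [MulSemiringAction G L] {n : ℕ}

theorem IsPrimitiveRoot.smul_eq_inv_of_pow_eq_one [NeZero n] {ζ : L} (hζ : IsPrimitiveRoot ζ n)
    {σ : G} (hσ : σ • ζ = ζ⁻¹) {η : L} (hη : η ^ n = 1) : σ • η = η⁻¹ := by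
  obtain ⟨i, -, rfl⟩ := hζ.eq_pow_of_pow_eq_one hη
  rw [smul_pow', hσ, inv_pow]

theorem smul_div_self_pow_eq_one {g : G} {y : L} (hy : y ≠ 0) (h : g • y ^ n = y ^ n) :
    (g • y / y) ^ n = 1 := by
  rw [div_pow, ← smul_pow', h, div_self (pow_ne_zero n hy)]

theorem exists_pow_eq_one_smul_mul_eq_self (hn : Odd n) {ζ : L} (hζ : IsPrimitiveRoot ζ n)
    {σ : G} (hσ : σ • ζ = ζ⁻¹) {y : L} (hy : y ≠ 0) (h : σ • y ^ n = y ^ n) :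
    ∃ η : L, η ^ n = 1 ∧ σ • (η * y) = η * y := by
  have : NeZero n := ⟨hn.pos.ne'⟩
  set c := σ • y / y
  have hc : c ^ n = 1 := smul_div_self_pow_eq_one hy h
  set η := c ^ ((n + 1) / 2)
  have hη : η ^ n = 1 := by rw [pow_right_comm, hc, one_pow]
  have hη0 : η ≠ 0 := (IsUnit.of_pow_eq_one hη hn.pos.ne').ne_zero
  refine ⟨η, hη, ?_⟩
  calc σ • (η * y) = η⁻¹ * (c * y) := by
        rw [smul_mul', hζ.smul_eq_inv_of_pow_eq_one hσ hη, div_mul_cancel₀ _ hy]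
    _ = η⁻¹ * (η ^ 2 * y) := by rw [hn.sq_pow_succ_div_two hc]
    _ = η * y := by field_simp

theorem smul_eq_self_of_smul_pow_eq_self (hn : Odd n) {ζ : L} (hζ : IsPrimitiveRoot ζ n)
    {σ : G} (hσ : σ • ζ = ζ⁻¹) (hσc : ∀ g : G, Commute σ g) {w : L} (hw : w ≠ 0)
    (hσw : σ • w = w) {g : G} (hg : g • w ^ n = w ^ n) : g • w = w := by
  have : NeZero n := ⟨hn.pos.ne'⟩
  set ε := g • w / w
  have hε : ε ^ n = 1 := smul_div_self_pow_eq_one hw hg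
  have hε0 : ε ≠ 0 := (IsUnit.of_pow_eq_one hε hn.pos.ne').ne_zero
  have hgw : g • w = ε * w := (div_mul_cancel₀ _ hw).symm
  have hεinv : ε⁻¹ = ε := by
    have hσgw : σ • g • w = g • w := by rw [smul_smul, hσc g, ← smul_smul, hσw]
    rw [hgw, smul_mul', hζ.smul_eq_inv_of_pow_eq_one hσ hε, hσw] at hσgw
    exact mul_right_cancel₀ hw hσgw
  have hε2 : ε ^ 2 = 1 := by rw [sq, ← mul_inv_cancel₀ hε0, hεinv]
  have hε1 : ε = 1 := (pow_eq_one_iff_of_coprime (Nat.coprime_two_left.mpr hn)).mp ⟨hε2, hε⟩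
  rw [hgw, hε1, one_mul]

theorem exists_pow_eq_and_forall_smul_eq_self (hn : Odd n) {ζ : L} (hζ : IsPrimitiveRoot ζ n)
    {σ : G} (hσ : σ • ζ = ζ⁻¹) (hσc : ∀ g : G, Commute σ g) {y : L}
    (h : ∀ g : G, g • y ^ n = y ^ n) : ∃ w : L, w ^ n = y ^ n ∧ ∀ g : G, g • w = w := by
  obtain rfl | hy := eq_or_ne y 0
  · exact ⟨0, rfl, smul_zero⟩
  obtain ⟨η, hη, hσηy⟩ := exists_pow_eq_one_smul_mul_eq_self hn hζ hσ hy (h σ)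
  have hηy : (η * y) ^ n = y ^ n := by rw [mul_pow, hη, one_mul]
  have hηy0 : η * y ≠ 0 := mul_ne_zero (IsUnit.of_pow_eq_one hη hn.pos.ne').ne_zero hy
  refine ⟨η * y, hηy, fun g => smul_eq_self_of_smul_pow_eq_self hn hζ hσ hσc hηy0 hσηy ?_⟩
  rw [hηy, h g]

end InvertingRootsOfUnity

namespace IsPrimitiveRoot

variable {n : ℕ} [NeZero n]

theorem pow_val_neg_one {M : Type*} [DivisionCommMonoid M] {ζ : M} (hζ : IsPrimitiveRoot ζ n) :
    ζ ^ (-1 : ZMod n).val = ζ⁻¹ := by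
  refine eq_inv_of_mul_eq_one_left ?_
  rw [← pow_succ, hζ.pow_eq_one_iff_dvd, ← ZMod.natCast_eq_zero_iff]
  push_cast [ZMod.natCast_val, ZMod.cast_id]
  ring

variable {K L : Type*} [Field K] [Field L] [Algebra K L] [IsCyclotomicExtension {n} K L] {ζ : L}

theorem autToPow_bijective_of_finrank_eq_totient (hζ : IsPrimitiveRoot ζ n)
    (h : Module.finrank K L = n.totient) : Function.Bijective (hζ.autToPow K) := by
  have := IsCyclotomicExtension.finiteDimensional {n} K L
  have := IsCyclotomicExtension.isGalois {n} K L
  refine (Fintype.bijective_iff_injective_and_card _).mpr ⟨hζ.autToPow_injective K, ?_⟩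
  rw [← Nat.card_eq_fintype_card, IsGalois.card_aut_eq_finrank, h, ZMod.card_units_eq_totient]

theorem exists_algEquiv_apply_eq_inv_of_finrank_eq_totient (hζ : IsPrimitiveRoot ζ n)
    (h : Module.finrank K L = n.totient) : ∃ σ : Gal(L/K), σ ζ = ζ⁻¹ := by
  obtain ⟨σ, hσ⟩ := (hζ.autToPow_bijective_of_finrank_eq_totient h).2 (-1)
  refine ⟨σ, ?_⟩
  rw [← hζ.autToPow_spec K σ, hσ, Units.val_neg, Units.val_one, hζ.pow_val_neg_one]

end IsPrimitiveRoot

theorem kummer_restriction_injective_odd_general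
    (p : ℕ) (hp : p.Prime) (hodd : Odd p) (ℓ : ℕ) (hℓ : 1 ≤ ℓ)
    (F : Type*) [Field F]
    (ζ : AlgebraicClosure F) (hζ : IsPrimitiveRoot ζ (p ^ ℓ))
    (hdeg : Module.finrank F F⟮ζ⟯ = p ^ (ℓ - 1) * (p - 1))
    (x : F)
    (h : ∃ y : F⟮ζ⟯, y ^ (p ^ ℓ) = algebraMap F F⟮ζ⟯ x) :
    ∃ z : F, z ^ (p ^ ℓ) = x := by
  obtain ⟨y, hy⟩ := h
  have : NeZero (p ^ ℓ) := ⟨pow_ne_zero ℓ hp.ne_zero⟩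
  have : IsCyclotomicExtension {p ^ ℓ} F F⟮ζ⟯ :=
    hζ.intermediateField_adjoin_isCyclotomicExtension F
  have := IsCyclotomicExtension.finiteDimensional {p ^ ℓ} F F⟮ζ⟯
  have := IsCyclotomicExtension.isGalois {p ^ ℓ} F F⟮ζ⟯
  have := IsCyclotomicExtension.isMulCommutative {p ^ ℓ} F F⟮ζ⟯
  have hgen : IsPrimitiveRoot (AdjoinSimple.gen F ζ) (p ^ ℓ) :=
    IsPrimitiveRoot.coe_submonoidClass_iff.mp hζ
  obtain ⟨σ, hσ⟩ := hgen.exists_algEquiv_apply_eq_inv_of_finrank_eq_totient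
    (by rw [hdeg, Nat.totient_prime_pow hp hℓ])
  obtain ⟨w, hw, hwfix⟩ := exists_pow_eq_and_forall_smul_eq_self hodd.pow hgen hσ
    (fun τ => Std.Commutative.comm σ τ) (fun τ => by rw [hy]; exact τ.commutes x)
  obtain ⟨z, rfl⟩ := (IsGalois.mem_bot_iff_fixed w).mpr hwfix
  exact ⟨z, (algebraMap F F⟮ζ⟯).injective (by rw [map_pow]; exact hw.trans hy)⟩

/-- Let `p` be an odd prime, `ℓ ≥ 1`, `F` a field of characteristic zero,
`ζ` a primitive `p^ℓ`-th root of unity in an algebraic closure of `F`, and suppose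
`[F(ζ) : F] = p^(ℓ−1)·(p−1)`. If a nonzero `x ∈ F` is a `p^ℓ`-th power in `F(ζ)`,
then `x` is a `p^ℓ`-th power in `F`. -/
theorem kummer_restriction_injective_odd
    (p : ℕ) (hp : p.Prime) (hodd : Odd p) (ℓ : ℕ) (hℓ : 1 ≤ ℓ)
    (F : Type*) [Field F] [CharZero F]
    (ζ : AlgebraicClosure F) (hζ : IsPrimitiveRoot ζ (p ^ ℓ))
    (hdeg : Module.finrank F F⟮ζ⟯ = p ^ (ℓ - 1) * (p - 1))
    (x : F) (hx : x ≠ 0)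
    (h : ∃ y : F⟮ζ⟯, y ^ (p ^ ℓ) = algebraMap F F⟮ζ⟯ x) :
    ∃ z : F, z ^ (p ^ ℓ) = x :=
  kummer_restriction_injective_odd_general p hp hodd ℓ hℓ F ζ hζ hdeg x h
end

section
/- Let ℓ ≥ 2 be an integer. Let F be a field of characteristic zero, let ζ be a primitive 2^(ℓ+1)-th root of unity in an algebraic closure of F, and assume that the degree [F(ζ):F] equals 2^ℓ. If x ∈ Fˣ is a 2^ℓ-th power in the field F(ζ), then x⁴ is a 2^ℓ-th power in F. Equivalently, the kernel of the natural map Fˣ/(Fˣ)^(2^ℓ) → F(ζ)ˣ/(F(ζ)ˣ)^(2^ℓ) is killed by 4. -/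
open IntermediateField

/-! By the degree hypothesis the cyclotomic character identifies the (abelian) Galois group of
`F(ζ)/F` with `(ℤ/2^(ℓ+1))ˣ`, so some `σ` acts on roots of unity by `ρ ↦ ρ^5`. If `y^(2^ℓ) = x`,
then every `g` sends `y` to `c y` with `c` a root of unity, so `σ c = c^5`; since `g` commutes
with `σ`, the element `y^5 / σ y` is fixed by every `g`, hence lies in `F`, and its `2^ℓ`-th
power is `x^5 / x = x^4`. -/

theorem AlgEquiv.apply_pow_div_apply_eq_self_of_commute {F K : Type*} [CommSemiring F] [Field K]
    [Algebra F K] {σ g : K ≃ₐ[F] K} (hcomm : Commute σ g) {y c : K} (hy : y ≠ 0)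
    (hgy : g y = c * y) {k : ℕ} (hσ : σ c = c ^ k) :
    g (y ^ k / σ y) = y ^ k / σ y := by
  have hc : c ≠ 0 := by
    rintro rfl
    exact hy (by simpa using hgy)
  have hgσy : g (σ y) = c ^ k * σ y := by
    rw [← AlgEquiv.mul_apply, ← hcomm.eq, AlgEquiv.mul_apply, hgy, map_mul, hσ]
  rw [map_div₀, map_pow, hgσy, hgy, mul_pow, mul_div_mul_left _ _ (pow_ne_zero k hc)]

theorem AlgEquiv.pow_eq_one_of_apply_eq_mul {F K : Type*} [CommSemiring F] [Field K]
    [Algebra F K] (g : K ≃ₐ[F] K) {y c : K} (hy : y ≠ 0) (hgy : g y = c * y) {m : ℕ} {x : F}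
    (hx : y ^ m = algebraMap F K x) :
    c ^ m = 1 := by
  have : c ^ m * y ^ m = 1 * y ^ m := by
    rw [← mul_pow, ← hgy, ← map_pow, hx, AlgEquiv.commutes, one_mul]
  exact mul_right_cancel₀ (pow_ne_zero m hy) this

theorem IsPrimitiveRoot.apply_eq_pow_of_autToPow_eq {R S : Type*} [CommRing R] [CommRing S]
    [IsDomain S] [Algebra R S] {μ : S} {n : ℕ} [NeZero n] (hμ : IsPrimitiveRoot μ n)
    {f : S ≃ₐ[R] S} {k : ℕ} (hf : (hμ.autToPow R f : ZMod n) = k) {ρ : S} (hρ : ρ ^ n = 1) :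
    f ρ = ρ ^ k := by
  have hρk : ρ ^ (k % n) = ρ ^ k := by
    conv_rhs => rw [← Nat.mod_add_div k n, pow_add, pow_mul, hρ, one_pow, mul_one]
  obtain ⟨i, -, rfl⟩ := hμ.eq_pow_of_pow_eq_one hρ
  rw [← hρk, ← ZMod.val_natCast, ← hf, map_pow, ← hμ.autToPow_spec R f, ← pow_mul, ← pow_mul,
    mul_comm]

theorem IsPrimitiveRoot.autToPow_surjective_of_finrank_eq_totient {K L : Type*} [Field K] [Field L]
    [Algebra K L] {μ : L} {n : ℕ} [NeZero n] [IsCyclotomicExtension {n} K L]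
    (hμ : IsPrimitiveRoot μ n) (hdeg : Module.finrank K L = n.totient) :
    Function.Surjective (hμ.autToPow K) := by
  have := IsCyclotomicExtension.isGalois {n} K L
  have := IsCyclotomicExtension.finiteDimensional {n} K L
  refine ((hμ.autToPow_injective K).bijective_of_nat_card_le ?_).surjective
  rw [IsGalois.card_aut_eq_finrank, hdeg, Nat.card_eq_fintype_card, ZMod.card_units_eq_totient]

theorem kummer_restriction_kernel_killed_by_four_general
    (ℓ : ℕ)
    (F : Type*) [Field F]
    (ζ : AlgebraicClosure F) (hζ : IsPrimitiveRoot ζ (2 ^ (ℓ + 1)))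
    (hdeg : Module.finrank F F⟮ζ⟯ = 2 ^ ℓ)
    (x : F) (hx : x ≠ 0)
    (h : ∃ y : F⟮ζ⟯, y ^ (2 ^ ℓ) = algebraMap F F⟮ζ⟯ x) :
    ∃ z : F, z ^ (2 ^ ℓ) = x ^ 4 := by
  obtain ⟨y, hy⟩ := h
  have hy0 : y ≠ 0 := by
    rintro rfl
    exact hx ((algebraMap F F⟮ζ⟯).injective (by simpa using hy.symm))
  have : IsCyclotomicExtension {2 ^ (ℓ + 1)} F F⟮ζ⟯ :=
    hζ.intermediateField_adjoin_isCyclotomicExtension F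
  have : IsAbelianGalois F F⟮ζ⟯ := IsCyclotomicExtension.isAbelianGalois {2 ^ (ℓ + 1)} F F⟮ζ⟯
  have := IsCyclotomicExtension.finiteDimensional {2 ^ (ℓ + 1)} F F⟮ζ⟯
  have hζK : IsPrimitiveRoot (AdjoinSimple.gen F ζ) (2 ^ (ℓ + 1)) :=
    IsPrimitiveRoot.coe_submonoidClass_iff.mp hζ
  obtain ⟨σ, hσ⟩ := hζK.autToPow_surjective_of_finrank_eq_totient
    (by rw [hdeg, Nat.totient_prime_pow_succ Nat.prime_two]; simp)
    (ZMod.unitOfCoprime 5 (Nat.Coprime.pow_right _ (by decide)))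
  have hfixed (g : Gal(F⟮ζ⟯/F)) : g (y ^ 5 / σ y) = y ^ 5 / σ y := by
    have hgy : g y = g y / y * y := (div_mul_cancel₀ _ hy0).symm
    have hc : (g y / y) ^ 2 ^ (ℓ + 1) = 1 := by
      rw [pow_succ, pow_mul, g.pow_eq_one_of_apply_eq_mul hy0 hgy hy, one_pow]
    exact AlgEquiv.apply_pow_div_apply_eq_self_of_commute (Std.Commutative.comm σ g) hy0 hgy
      (hζK.apply_eq_pow_of_autToPow_eq (by rw [hσ, ZMod.coe_unitOfCoprime]) hc)
  obtain ⟨z, hz⟩ := (IsGalois.mem_range_algebraMap_iff_fixed _).2 hfixed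
  refine ⟨z, (algebraMap F F⟮ζ⟯).injective ?_⟩
  rw [map_pow, hz, div_pow, ← pow_mul, mul_comm, pow_mul, ← map_pow, hy, AlgEquiv.commutes,
    map_pow, pow_succ, mul_div_cancel_right₀ _ ((map_ne_zero _).2 hx)]

/-- Let `ℓ ≥ 2`, `F` a field of characteristic zero, `ζ` a primitive
`2^(ℓ+1)`-th root of unity in an algebraic closure of `F`, and suppose
`[F(ζ) : F] = 2^ℓ`. If a nonzero `x ∈ F` is a `2^ℓ`-th power in `F(ζ)`, then `x⁴` is a
`2^ℓ`-th power in `F` (the kernel of the Kummer restriction map is killed by `4`). -/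
theorem kummer_restriction_kernel_killed_by_four
    (ℓ : ℕ) (hℓ : 2 ≤ ℓ)
    (F : Type*) [Field F] [CharZero F]
    (ζ : AlgebraicClosure F) (hζ : IsPrimitiveRoot ζ (2 ^ (ℓ + 1)))
    (hdeg : Module.finrank F F⟮ζ⟯ = 2 ^ ℓ)
    (x : F) (hx : x ≠ 0)
    (h : ∃ y : F⟮ζ⟯, y ^ (2 ^ ℓ) = algebraMap F F⟮ζ⟯ x) :
    ∃ z : F, z ^ (2 ^ ℓ) = x ^ 4 :=
  kummer_restriction_kernel_killed_by_four_general ℓ F ζ hζ hdeg x hx h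
end

section
/- Let p be an odd prime, ℓ ≥ 1 an integer, G the unit group (ℤ/p^ℓℤ)ˣ, and M = ℤ/p^ℓℤ, with G acting on M by multiplication. Then every crossed homomorphism f : G → M is principal: if f satisfies f(u·v) = f(u) + u·f(v) for all u, v ∈ G, then there exists x ∈ M such that f(u) = u·x − x for all u ∈ G. In other words, the first group cohomology H¹((ℤ/p^ℓℤ)ˣ, ℤ/p^ℓℤ) for the multiplication action vanishes. -/
/-! Evaluating the cocycle identity on `u * g = g * u` gives `(g - 1) f(u) = (u - 1) f(g)`, so a
single unit `g` with `g - 1` invertible makes `f` principal. Modulo an odd prime power, `g = 2`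
is such a unit. -/

theorem exists_eq_mul_sub_of_crossedHom_of_isUnit_sub_one {R : Type*} [CommRing R]
    (f : Rˣ → R) (hf : ∀ u v : Rˣ, f (u * v) = f u + (u : R) * f v)
    (g : Rˣ) (hg : IsUnit ((g : R) - 1)) :
    ∃ x : R, ∀ u : Rˣ, f u = (u : R) * x - x := by
  refine ⟨hg.unit⁻¹ * f g, fun u => ?_⟩
  have hcomm : ((g : R) - 1) * f u = ((u : R) - 1) * f g := by
    have h := hf u g
    rw [mul_comm u g, hf g u] at h
    linear_combination h
  calc f u = hg.unit⁻¹ * (((g : R) - 1) * f u) := by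
        rw [← mul_assoc, hg.val_inv_mul, one_mul]
    _ = (u : R) * (hg.unit⁻¹ * f g) - hg.unit⁻¹ * f g := by rw [hcomm]; ring

theorem ZMod.isUnit_two_of_odd {n : ℕ} (hn : Odd n) : IsUnit (2 : ZMod n) := by
  simpa using (ZMod.isUnit_iff_coprime 2 n).mpr (Nat.coprime_two_left.mpr hn)

theorem h1_units_zmod_odd_prime_vanishes_general
    (p : ℕ) (hodd : Odd p) (ℓ : ℕ)
    (f : (ZMod (p ^ ℓ))ˣ → ZMod (p ^ ℓ))
    (hf : ∀ u v : (ZMod (p ^ ℓ))ˣ, f (u * v) = f u + (u : ZMod (p ^ ℓ)) * f v) :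
    ∃ x : ZMod (p ^ ℓ), ∀ u : (ZMod (p ^ ℓ))ˣ, f u = (u : ZMod (p ^ ℓ)) * x - x := by
  have htwo : IsUnit (2 : ZMod (p ^ ℓ)) := ZMod.isUnit_two_of_odd hodd.pow
  exact exists_eq_mul_sub_of_crossedHom_of_isUnit_sub_one f hf htwo.unit (by norm_num)

/-- Let `p` be an odd prime and `ℓ ≥ 1`. Every crossed homomorphism
`f : (ℤ/p^ℓℤ)ˣ → ℤ/p^ℓℤ` (for the multiplication action) is principal; i.e.
`H¹((ℤ/p^ℓℤ)ˣ, ℤ/p^ℓℤ) = 0`. -/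
theorem h1_units_zmod_odd_prime_vanishes
    (p : ℕ) (hp : p.Prime) (hodd : Odd p) (ℓ : ℕ) (hℓ : 1 ≤ ℓ)
    (f : (ZMod (p ^ ℓ))ˣ → ZMod (p ^ ℓ))
    (hf : ∀ u v : (ZMod (p ^ ℓ))ˣ, f (u * v) = f u + (u : ZMod (p ^ ℓ)) * f v) :
    ∃ x : ZMod (p ^ ℓ), ∀ u : (ZMod (p ^ ℓ))ˣ, f u = (u : ZMod (p ^ ℓ)) * x - x :=
  h1_units_zmod_odd_prime_vanishes_general p hodd ℓ f hf
end

section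
/- Let ℓ ≥ 1 be an integer, G the unit group (ℤ/2^(ℓ+1)ℤ)ˣ, and M = ℤ/2^ℓℤ, with G acting on M through reduction modulo 2^ℓ followed by multiplication (u·x = ū·x, where ū is the image of u in ℤ/2^ℓℤ). Then for every crossed homomorphism f : G → M (i.e. f(u·v) = f(u) + u·f(v) for all u, v ∈ G), there exists x ∈ M such that 4·f(u) = u·x − x for all u ∈ G. In other words, the first group cohomology H¹((ℤ/2^(ℓ+1)ℤ)ˣ, ℤ/2^ℓℤ) is killed by 4. -/
/-! Since `G` is abelian, expanding `f (u * g) = f (g * u)` with the cocycle rule gives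
`(ḡ - 1) f(u) = (ū - 1) f(g)` for all `u, g`. Taking `g = 5`, whose image is `5`, yields
`4 f(u) = ū x - x` with `x = f(5)`. -/

theorem sub_one_mul_eq_mul_sub_of_crossedHom {G R : Type*} [CommMagma G] [CommRing R] (χ f : G → R)
    (hf : ∀ u v, f (u * v) = f u + χ u * f v) (g u : G) :
    (χ g - 1) * f u = χ u * f g - f g := by
  have h := hf g u
  rw [mul_comm, hf u g] at h
  linear_combination -h

theorem h1_units_zmod_two_killed_by_four_general
    (ℓ : ℕ)
    (f : (ZMod (2 ^ (ℓ + 1)))ˣ → ZMod (2 ^ ℓ))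
    (hf : ∀ u v : (ZMod (2 ^ (ℓ + 1)))ˣ, f (u * v) = f u +
      ZMod.castHom (pow_dvd_pow 2 ℓ.le_succ) (ZMod (2 ^ ℓ)) (u : ZMod (2 ^ (ℓ + 1))) * f v) :
    ∃ x : ZMod (2 ^ ℓ), ∀ u : (ZMod (2 ^ (ℓ + 1)))ˣ,
      4 * f u =
        ZMod.castHom (pow_dvd_pow 2 ℓ.le_succ) (ZMod (2 ^ ℓ)) (u : ZMod (2 ^ (ℓ + 1))) * x - x := by
  let five : (ZMod (2 ^ (ℓ + 1)))ˣ :=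
    ZMod.unitOfCoprime 5 (Nat.Coprime.pow_right _ (by norm_num))
  have h_five : ZMod.castHom (pow_dvd_pow 2 ℓ.le_succ) (ZMod (2 ^ ℓ))
      (five : ZMod (2 ^ (ℓ + 1))) = 5 := by
    rw [ZMod.coe_unitOfCoprime, map_natCast, Nat.cast_ofNat]
  refine ⟨f five, fun u => ?_⟩
  have h := sub_one_mul_eq_mul_sub_of_crossedHom _ f hf five u
  rw [h_five] at h
  linear_combination h

/-- Let `ℓ ≥ 1` and let `G = (ℤ/2^(ℓ+1)ℤ)ˣ` act on `M = ℤ/2^ℓℤ` by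
reduction modulo `2^ℓ` followed by multiplication. For every crossed homomorphism
`f : G → M` there exists `x ∈ M` with `4·f(u) = ū·x − x` for all `u`; i.e.
`H¹((ℤ/2^(ℓ+1)ℤ)ˣ, ℤ/2^ℓℤ)` is killed by `4`. -/
theorem h1_units_zmod_two_killed_by_four
    (ℓ : ℕ) (hℓ : 1 ≤ ℓ)
    (f : (ZMod (2 ^ (ℓ + 1)))ˣ → ZMod (2 ^ ℓ))
    (hf : ∀ u v : (ZMod (2 ^ (ℓ + 1)))ˣ, f (u * v) = f u +
      ZMod.castHom (pow_dvd_pow 2 ℓ.le_succ) (ZMod (2 ^ ℓ)) (u : ZMod (2 ^ (ℓ + 1))) * f v) :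
    ∃ x : ZMod (2 ^ ℓ), ∀ u : (ZMod (2 ^ (ℓ + 1)))ˣ,
      4 * f u =
        ZMod.castHom (pow_dvd_pow 2 ℓ.le_succ) (ZMod (2 ^ ℓ)) (u : ZMod (2 ^ (ℓ + 1))) * x - x :=
  h1_units_zmod_two_killed_by_four_general ℓ f hf
end
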